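/- Let H be a Hopf algebra and A an algebra equipped with an adjoint H-action h ▷ a = u(h₍₁₎)·a·u(S(h₍₂₎)) for an algebra homomorphism u : H → A. Then the map A#H → A⊗H sending a#h to a·u(h₍₁₎) ⊗ h₍₂₎ is an isomorphism of algebras, where A⊗H carries the tensor product algebra structure with the two factors commuting. -/

import Mathlib

/-!
For `v : H →ₗ A` let `φ_v (a ⊗ h) = a·v(h₍₁₎) ⊗ h₍₂₎` (`convTwist v`). Coassociativity gives
`φ_v ∘ φ_w = φ_{w ⋆ v}` for the convolution product, and `φ_1 = id`; as `u ∘ S` is the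
convolution inverse of the algebra map `u`, `φ_u` is bijective with inverse `φ_{u ∘ S}`.
Multiplicativity reduces to `(h₍₁₎ ▷ b)·u(h₍₂₎) = u(h)·b`, i.e. `(· ▷ b) ⋆ u = u·b`, which
holds because `(· ▷ b) = (u·b) ⋆ (u ∘ S)`.
-/

open TensorProduct LinearMap

noncomputable section

variable (k : Type) [Field k]
variable (H : Type) [Ring H] [HopfAlgebra k H]

/-- `F`, with inverse `Finv`, is a counital 2-cocycle on the Hopf algebra `H`:
`(F⊗1)·(Δ⊗id)(F) = (1⊗F)·(id⊗Δ)(F)` and `(ε⊗id)(F) = 1 = (id⊗ε)(F)`. -/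
def IsCocycle (F Finv : H ⊗[k] H) : Prop :=
  F * Finv = 1 ∧ Finv * F = 1 ∧
  (F ⊗ₜ[k] (1 : H)) * (TensorProduct.map Coalgebra.comul LinearMap.id F) =
    (TensorProduct.assoc k H H H).symm
      (((1 : H) ⊗ₜ[k] F) * (TensorProduct.map LinearMap.id Coalgebra.comul F)) ∧
  TensorProduct.map Coalgebra.counit LinearMap.id F = 1 ∧
  TensorProduct.map LinearMap.id Coalgebra.counit F = 1

/-- A (left) module-algebra structure of a Hopf algebra `H` on an algebra `A`:
`A` is an algebra object in the category of `H`-modules. -/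
structure ModuleAlgebra (A : Type) [Ring A] [Algebra k A] where
  act : H →ₗ[k] Module.End k A
  act_one : act 1 = 1
  act_mul : ∀ g h : H, act (g * h) = act g * act h
  act_algebra_unit : ∀ h : H, act h (1 : A) = (Coalgebra.counit h : k) • (1 : A)
  act_algebra_mul : ∀ (h : H) (a b : A),
    act h (a * b) = LinearMap.mul' k A
      ((TensorProduct.homTensorHomMap (RingHom.id k) A A A A
        (TensorProduct.map act act (Coalgebra.comul h))) (a ⊗ₜ[k] b))

variable {k H}

/-- The operator on `A ⊗ B` obtained by letting an element `x ∈ H ⊗ H` act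
legwise through the actions `actA`, `actB`. -/
def legAct {A B : Type} [AddCommGroup A] [Module k A] [AddCommGroup B] [Module k B]
    (actA : H →ₗ[k] Module.End k A) (actB : H →ₗ[k] Module.End k B) (x : H ⊗[k] H) :
    A ⊗[k] B →ₗ[k] A ⊗[k] B :=
  TensorProduct.homTensorHomMap (RingHom.id k) A B A B (TensorProduct.map actA actB x)

/-- The twisted product `m_F = m ∘ (F⁻¹ ▷ −)` on `A`. -/
def twistedMul {A : Type} [Ring A] [Algebra k A] (ma : ModuleAlgebra k H A)
    (Finv : H ⊗[k] H) : A ⊗[k] A →ₗ[k] A :=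
  LinearMap.mul' k A ∘ₗ legAct ma.act ma.act Finv

/-- The twisted coproduct `Δ_F(h) = F·Δ(h)·F⁻¹`. -/
def twistedComul (F Finv : H ⊗[k] H) : H →ₗ[k] H ⊗[k] H :=
  LinearMap.mulLeft k F ∘ₗ LinearMap.mulRight k Finv ∘ₗ Coalgebra.comul


/-- A representation of a `k`-algebra `A` on a `k`-vector space `V`. -/
structure AlgRep (A : Type) [Ring A] [Algebra k A] (V : Type) [AddCommGroup V] [Module k V] where
  ρ : A →ₗ[k] Module.End k V
  ρ_one : ρ 1 = 1
  ρ_mul : ∀ a b : A, ρ (a * b) = ρ a * ρ b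

/-- `V` is an `(H,A)`-module: the `A`-action is a morphism of `H`-modules, i.e.
`h ▷ (a ▷_A v) = (h₍₁₎ ▷ a) ▷_A (h₍₂₎ ▷ v)`. -/
def IsHAModule {A V : Type} [Ring A] [Algebra k A] [AddCommGroup V] [Module k V]
    (ma : ModuleAlgebra k H A) (ρA : AlgRep (k := k) A V) (ρH : AlgRep (k := k) H V) : Prop :=
  ∀ (h : H) (a : A) (v : V),
    ρH.ρ h (ρA.ρ a v) =
      TensorProduct.lift ρA.ρ (legAct ma.act ρH.ρ (Coalgebra.comul h) (a ⊗ₜ[k] v))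

/-- The Giaquinto–Zhang twisted action `▷_F = ▷_A ∘ (F⁻¹ ▷ −)` of `A_F` on `V`. -/
def twistedAct {A V : Type} [Ring A] [Algebra k A] [AddCommGroup V] [Module k V]
    (ma : ModuleAlgebra k H A) (ρA : AlgRep (k := k) A V) (ρH : AlgRep (k := k) H V)
    (Finv : H ⊗[k] H) : A →ₗ[k] Module.End k V :=
  TensorProduct.curry (TensorProduct.lift ρA.ρ ∘ₗ legAct ma.act ρH.ρ Finv)

/-- Generic smash-product multiplication on `A ⊗ H`, for a multiplication `μA` on `A`,
comultiplication `δ` and multiplication `μH` on `H`, and action `actUn : H ⊗ A → A`: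
`(a # h)(b # g) = a·(h₍₁₎ ▷ b) # h₍₂₎·g`. -/
def smashMulMap {A : Type} [AddCommGroup A] [Module k A]
    (μA : A ⊗[k] A →ₗ[k] A) (δ : H →ₗ[k] H ⊗[k] H) (μH : H ⊗[k] H →ₗ[k] H)
    (actUn : H ⊗[k] A →ₗ[k] A) :
    (A ⊗[k] H) ⊗[k] (A ⊗[k] H) →ₗ[k] A ⊗[k] H :=
  TensorProduct.map μA LinearMap.id
    ∘ₗ (TensorProduct.assoc k A A H).symm.toLinearMap
    ∘ₗ (TensorProduct.map LinearMap.id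
          ((TensorProduct.map actUn μH)
            ∘ₗ (TensorProduct.tensorTensorTensorComm k H H A H).toLinearMap))
    ∘ₗ (TensorProduct.assoc k A (H ⊗[k] H) (A ⊗[k] H)).toLinearMap
    ∘ₗ TensorProduct.map (TensorProduct.map LinearMap.id δ) LinearMap.id

/-- The adjoint (strongly inner) action `h ▷ a = u(h₍₁₎)·a·u(S(h₍₂₎))` of `H` on `A`,
along an algebra homomorphism `u : H → A`. -/
def adjointAction {A : Type} [Ring A] [Algebra k A] (u : H →ₐ[k] A) :
    H →ₗ[k] Module.End k A :=
  LinearMap.mul' k (Module.End k A)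
    ∘ₗ TensorProduct.map (LinearMap.mul k A ∘ₗ u.toLinearMap)
        ((LinearMap.mul k A).flip ∘ₗ u.toLinearMap ∘ₗ HopfAlgebra.antipode (R := k))
    ∘ₗ Coalgebra.comul

section ConvTwist

open Coalgebra WithConv Algebra.TensorProduct

variable {R A C : Type*} [CommSemiring R] [Semiring A] [Algebra R A] [Semiring C] [Bialgebra R C]

def convTwist (v : C →ₗ[R] A) : A ⊗[R] C →ₗ[R] A ⊗[R] C :=
  TensorProduct.map (LinearMap.mul' R A ∘ₗ TensorProduct.map LinearMap.id v) LinearMap.id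
    ∘ₗ (TensorProduct.assoc R A C C).symm.toLinearMap
    ∘ₗ TensorProduct.map LinearMap.id Coalgebra.comul

lemma convTwist_tmul (v : C →ₗ[R] A) (a : A) (c : C) :
    convTwist v (a ⊗ₜ c) = (a ⊗ₜ 1) * v.rTensor C (comul c) := by
  simp only [convTwist, coe_comp, Function.comp_apply, TensorProduct.map_tmul, id_coe, id_eq,
    LinearEquiv.coe_coe]
  induction comul (R := R) c using TensorProduct.induction_on with
  | zero => simp
  | tmul x y => simp
  | add x y hx hy => simp [tmul_add, hx, hy, mul_add]

lemma convTwist_tmul_one_mul (v : C →ₗ[R] A) (a : A) (z : A ⊗[R] C) :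
    convTwist v ((a ⊗ₜ 1) * z) = (a ⊗ₜ 1) * convTwist v z := by
  induction z using TensorProduct.induction_on with
  | zero => simp
  | tmul a' c =>
    rw [tmul_mul_tmul, one_mul, convTwist_tmul, convTwist_tmul, ← mul_assoc, tmul_mul_tmul,
      mul_one]
  | add x y hx hy => simp [mul_add, hx, hy]

lemma convTwist_mul_one_tmul (u : C →ₐ[R] A) (z : A ⊗[R] C) (c : C) :
    convTwist u.toLinearMap (z * (1 ⊗ₜ c)) =
      convTwist u.toLinearMap z * u.toLinearMap.rTensor C (comul (R := R) c) := by
  induction z using TensorProduct.induction_on with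
  | zero => simp
  | tmul a c' =>
    have hmul := map_mul (Algebra.TensorProduct.rTensor C u) (comul (R := R) c') (comul c)
    rw [tmul_mul_tmul, mul_one, convTwist_tmul, convTwist_tmul, Bialgebra.comul_mul, mul_assoc]
    exact congrArg _ hmul
  | add x y hx hy => simp [add_mul, hx, hy]

lemma rTensor_comp_comul_eq_convMul (v : C →ₗ[R] A) :
    toConv (v.rTensor C ∘ₗ comul (R := R)) =
      toConv ((includeLeft : A →ₐ[R] A ⊗[R] C).toLinearMap ∘ₗ v) *
        toConv (includeRight : C →ₐ[R] A ⊗[R] C).toLinearMap := by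
  ext c
  rw [LinearMap.convMul_apply]
  change v.rTensor C (comul c) = _
  induction comul (R := R) c using TensorProduct.induction_on with
  | zero => simp
  | tmul x y => simp
  | add x y hx hy => simp_all

-- Coassociativity enters through the associativity of convolution on `C →ₗ A ⊗ C`.
lemma convTwist_rTensor_comul (v w : C →ₗ[R] A) (c : C) :
    convTwist v (w.rTensor C (comul c)) = (toConv w * toConv v).ofConv.rTensor C (comul c) := by
  have hleft : convTwist v ∘ₗ w.rTensor C =
      LinearMap.mul' R (A ⊗[R] C) ∘ₗ
        TensorProduct.map ((includeLeft : A →ₐ[R] A ⊗[R] C).toLinearMap ∘ₗ w)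
          (v.rTensor C ∘ₗ comul) := by
    ext x y
    simp [convTwist_tmul]
  calc convTwist v (w.rTensor C (comul c))
      = (toConv ((includeLeft : A →ₐ[R] A ⊗[R] C).toLinearMap ∘ₗ w) *
          toConv (v.rTensor C ∘ₗ comul)) c :=
        LinearMap.congr_fun hleft (comul c)
    _ = ((toConv ((includeLeft : A →ₐ[R] A ⊗[R] C).toLinearMap ∘ₗ w) *
          toConv ((includeLeft : A →ₐ[R] A ⊗[R] C).toLinearMap ∘ₗ v)) *
          toConv (includeRight : C →ₐ[R] A ⊗[R] C).toLinearMap) c := by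
        rw [rTensor_comp_comul_eq_convMul, mul_assoc]
    _ = (toConv w * toConv v).ofConv.rTensor C (comul c) := by
        have hι : toConv ((includeLeft : A →ₐ[R] A ⊗[R] C).toLinearMap ∘ₗ
            (toConv w * toConv v).ofConv) =
            toConv ((includeLeft : A →ₐ[R] A ⊗[R] C).toLinearMap ∘ₗ w) *
              toConv ((includeLeft : A →ₐ[R] A ⊗[R] C).toLinearMap ∘ₗ v) :=
          congrArg toConv (LinearMap.algHom_comp_convMul_distrib _ _ _)
        rw [← hι, ← rTensor_comp_comul_eq_convMul]; rfl

lemma convTwist_comp (v w : C →ₗ[R] A) :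
    convTwist v ∘ₗ convTwist w = convTwist (toConv w * toConv v).ofConv := by
  ext a c
  simp only [AlgebraTensorModule.curry_apply, curry_apply, LinearMap.coe_restrictScalars, coe_comp,
    Function.comp_apply, convTwist_tmul, convTwist_tmul_one_mul, convTwist_rTensor_comul]

lemma convTwist_one : convTwist (1 : WithConv (C →ₗ[R] A)).ofConv = LinearMap.id := by
  ext a c
  simp [convTwist_tmul, LinearMap.convOne_def, LinearMap.rTensor_comp, rTensor_counit_comul]

lemma convTwist_bijective {v w : C →ₗ[R] A} (hvw : toConv v * toConv w = 1)
    (hwv : toConv w * toConv v = 1) : Function.Bijective (convTwist v) := by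
  refine Function.bijective_iff_has_inverse.mpr ⟨convTwist w, fun z => ?_, fun z => ?_⟩
  · rw [← LinearMap.comp_apply, convTwist_comp, hvw, convTwist_one, LinearMap.id_apply]
  · rw [← LinearMap.comp_apply, convTwist_comp, hwv, convTwist_one, LinearMap.id_apply]

lemma rTensor_mulRight_comp_apply (b : A) (v : C →ₗ[R] A) (x : C ⊗[R] C) :
    (LinearMap.mulRight R b ∘ₗ v).rTensor C x = v.rTensor C x * (b ⊗ₜ 1) := by
  induction x using TensorProduct.induction_on with
  | zero => simp
  | tmul x y => simp
  | add x y hx hy => simp [hx, hy, add_mul]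

end ConvTwist

section ConvInverse

open Coalgebra WithConv

variable {R A C : Type*} [CommSemiring R] [Semiring A] [Algebra R A] [Semiring C]
  [HopfAlgebra R C]

lemma convMul_comp_antipode_eq_one (u : C →ₐ[R] A) :
    toConv u.toLinearMap * toConv (u.toLinearMap ∘ₗ HopfAlgebra.antipode R) = 1 := by
  ext c
  rw [(ℛ R c).convMul_apply]
  simp [← map_mul, ← map_sum, HopfAlgebra.sum_mul_antipode_eq_algebraMap_counit]

lemma comp_antipode_convMul_eq_one (u : C →ₐ[R] A) :
    toConv (u.toLinearMap ∘ₗ HopfAlgebra.antipode R) * toConv u.toLinearMap = 1 := by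
  ext c
  rw [(ℛ R c).convMul_apply]
  simp [← map_mul, ← map_sum, HopfAlgebra.sum_antipode_mul_eq_algebraMap_counit]

end ConvInverse

section Adjoint

open Coalgebra WithConv

variable {A : Type} [Ring A] [Algebra k A]

lemma adjointAction_flip_eq_convMul (u : H →ₐ[k] A) (b : A) :
    toConv ((adjointAction u).flip b) =
      toConv (LinearMap.mulRight k b ∘ₗ u.toLinearMap) *
        toConv (u.toLinearMap ∘ₗ HopfAlgebra.antipode k) := by
  ext h
  rw [LinearMap.convMul_apply]
  change adjointAction u h b = _
  simp only [adjointAction, coe_comp, Function.comp_apply]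
  induction comul (R := k) h using TensorProduct.induction_on with
  | zero => simp
  | tmul x y => simp [mul_assoc]
  | add x y hx hy => simp_all

lemma adjointAction_flip_convMul_eq (u : H →ₐ[k] A) (b : A) :
    toConv ((adjointAction u).flip b) * toConv u.toLinearMap =
      toConv (LinearMap.mulRight k b ∘ₗ u.toLinearMap) := by
  rw [adjointAction_flip_eq_convMul, mul_assoc, comp_antipode_convMul_eq_one, mul_one]

lemma smashMulMap_tmul_tmul (act : H →ₗ[k] Module.End k A) (a b : A) (h g : H) :
    smashMulMap (LinearMap.mul' k A) comul (LinearMap.mul' k H) (TensorProduct.lift act)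
        ((a ⊗ₜ h) ⊗ₜ (b ⊗ₜ g)) =
      (a ⊗ₜ 1) * (act.flip b).rTensor H (comul h) * (1 ⊗ₜ g) := by
  simp only [smashMulMap, coe_comp, Function.comp_apply, TensorProduct.map_tmul, id_coe, id_eq,
    LinearEquiv.coe_coe, TensorProduct.assoc_tmul]
  induction comul (R := k) h using TensorProduct.induction_on with
  | zero => simp
  | tmul x y => simp
  | add x y hx hy => simp_all [tmul_add, add_tmul, mul_add, add_mul]

lemma convTwist_smashMulMap_tmul (u : H →ₐ[k] A) (x y : A ⊗[k] H) :
    convTwist u.toLinearMap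
        (smashMulMap (LinearMap.mul' k A) comul (LinearMap.mul' k H)
          (TensorProduct.lift (adjointAction u)) (x ⊗ₜ y)) =
      convTwist u.toLinearMap x * convTwist u.toLinearMap y := by
  suffices hmap : convTwist u.toLinearMap ∘ₗ
      smashMulMap (LinearMap.mul' k A) comul (LinearMap.mul' k H)
        (TensorProduct.lift (adjointAction u)) =
      LinearMap.mul' k (A ⊗[k] H) ∘ₗ
        TensorProduct.map (convTwist u.toLinearMap) (convTwist u.toLinearMap) from
    LinearMap.congr_fun hmap (x ⊗ₜ y)
  ext a h b g
  simp only [AlgebraTensorModule.curry_apply, curry_apply, LinearMap.coe_restrictScalars,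
    coe_comp, Function.comp_apply, TensorProduct.map_tmul, mul'_apply]
  rw [smashMulMap_tmul_tmul]
  calc convTwist u.toLinearMap
        ((a ⊗ₜ 1) * ((adjointAction u).flip b).rTensor H (comul h) * (1 ⊗ₜ g))
      = (a ⊗ₜ 1) * (convTwist u.toLinearMap (((adjointAction u).flip b).rTensor H (comul h)) *
          u.toLinearMap.rTensor H (comul g)) := by
        rw [mul_assoc, convTwist_tmul_one_mul, convTwist_mul_one_tmul]
    _ = (a ⊗ₜ 1) * ((LinearMap.mulRight k b ∘ₗ u.toLinearMap).rTensor H (comul h) *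
          u.toLinearMap.rTensor H (comul g)) := by
        rw [convTwist_rTensor_comul, adjointAction_flip_convMul_eq]
    _ = convTwist u.toLinearMap (a ⊗ₜ h) * convTwist u.toLinearMap (b ⊗ₜ g) := by
        simp only [rTensor_mulRight_comp_apply, convTwist_tmul, mul_assoc]

end Adjoint

theorem smash_iso_tensor_of_adjoint {A : Type} [Ring A] [Algebra k A]
    (ma : ModuleAlgebra k H A) (u : H →ₐ[k] A) (hadj : ma.act = adjointAction u) :
    Function.Bijective
      (TensorProduct.map (LinearMap.mul' k A ∘ₗ TensorProduct.map LinearMap.id u.toLinearMap)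
          LinearMap.id
        ∘ₗ (TensorProduct.assoc k A H H).symm.toLinearMap
        ∘ₗ TensorProduct.map LinearMap.id Coalgebra.comul :
        A ⊗[k] H →ₗ[k] A ⊗[k] H) ∧
    (∀ x y : A ⊗[k] H,
      (TensorProduct.map (LinearMap.mul' k A ∘ₗ TensorProduct.map LinearMap.id u.toLinearMap)
          LinearMap.id
        ∘ₗ (TensorProduct.assoc k A H H).symm.toLinearMap
        ∘ₗ TensorProduct.map LinearMap.id Coalgebra.comul)
          (smashMulMap (LinearMap.mul' k A) Coalgebra.comul (LinearMap.mul' k H)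
            (TensorProduct.lift ma.act) (x ⊗ₜ[k] y)) =
      (TensorProduct.map (LinearMap.mul' k A ∘ₗ TensorProduct.map LinearMap.id u.toLinearMap)
          LinearMap.id
        ∘ₗ (TensorProduct.assoc k A H H).symm.toLinearMap
        ∘ₗ TensorProduct.map LinearMap.id Coalgebra.comul) x *
      (TensorProduct.map (LinearMap.mul' k A ∘ₗ TensorProduct.map LinearMap.id u.toLinearMap)
          LinearMap.id
        ∘ₗ (TensorProduct.assoc k A H H).symm.toLinearMap
        ∘ₗ TensorProduct.map LinearMap.id Coalgebra.comul) y) ∧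
    (TensorProduct.map (LinearMap.mul' k A ∘ₗ TensorProduct.map LinearMap.id u.toLinearMap)
          LinearMap.id
        ∘ₗ (TensorProduct.assoc k A H H).symm.toLinearMap
        ∘ₗ TensorProduct.map LinearMap.id Coalgebra.comul)
      ((1 : A) ⊗ₜ[k] (1 : H)) = (1 : A) ⊗ₜ[k] (1 : H) := by
  rw [← convTwist.eq_1, hadj]
  refine ⟨convTwist_bijective (convMul_comp_antipode_eq_one u) (comp_antipode_convMul_eq_one u),
    convTwist_smashMulMap_tmul u, ?_⟩
  simp [convTwist_tmul, Algebra.TensorProduct.one_def]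

end
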